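/- Let Γ be a Coxeter matrix of small type, (𝔟,𝔠,𝔡) ∈ (𝔯^×)³, 𝔞 = 𝔡 − 𝔟𝔠𝔡⁻¹, and 𝔣 ∈ 𝔯. Suppose a family (𝔣_{i,α})_{(i,α)∈I×Φ⁺} of elements of 𝔯 satisfies: (C1) 𝔣_{i,α_i} = 𝔣 for all i ∈ I; (C2) 𝔣_{i,α_j} = 0 for all j ≠ i; (C3) 𝔣_{i,α} = −(𝔞𝔣𝔠⁻¹)(𝔟𝔡⁻¹)^{dep(α)−2} whenever dep(α) ≥ 2 and (α|α_i) > 0; and, for every α ∈ Φ⁺ with dep(α) ≥ 2, every i ∈ I with (α|α_i) ≤ 0, and every j ∈ I with (α|α_j) > 0 (so that β := s_j(α) ∈ Φ⁺ has dep(β) = dep(α)−1): (C4) 𝔣_{i,α} = 𝔟𝔡⁻¹·𝔣_{i,β} if m_{i,j} = 2; (C5) 𝔣_{i,α} = 𝔠⁻¹(𝔟𝔣_{j,γ} − 𝔞𝔣_{i,β}) if m_{i,j} = 3 and γ := s_i(β) ∈ Φ⁺ has dep(γ) = dep(β)−1; (C6) 𝔣_{i,α} = 𝔠⁻¹(𝔡𝔣_{j,β}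 − 𝔞𝔣_{i,β}) if m_{i,j} = 3 and s_i(β) = β; (C7) 𝔣_{i,α} = 𝔟𝔡⁻¹·𝔣_{i,β} + 𝔡𝔠⁻¹·𝔣_{j,β} + (𝔞𝔡𝔣𝔠⁻²)(𝔟𝔡⁻¹)^{dep(α)−3} if m_{i,j} = 3 and dep(s_i(β)) = dep(β)+1. Then the family (f_i)_{i∈I} ∈ (V*)^I defined by f_i(e_α) = 𝔣_{i,α} is an LK-family. -/

import Mathlib

set_option maxRecDepth 4000

namespace LK

/-! ### Coxeter matrices -/

/-- A Coxeter matrix on an index set `I` (entry `0` encodes `∞`). -/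
structure CoxM (I : Type) where
  m : I → I → ℕ
  symm : ∀ i j, m i j = m j i
  one_iff : ∀ i j, m i j = 1 ↔ i = j

variable {I : Type}

/-- A Coxeter matrix is of small type if all its entries belong to `{1,2,3}`. -/
def CoxM.Small (M : CoxM I) : Prop := ∀ i j, M.m i j = 1 ∨ M.m i j = 2 ∨ M.m i j = 3

/-- The alternating word `i j i j ⋯` with `k` letters. -/
def braidList (k : ℕ) (i j : I) : List I :=
  (List.range k).map (fun n => if n % 2 = 0 then i else j)

/-- The braid word `s_i s_j s_i ⋯` (`k` letters) in the free monoid. -/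
def braidWord (k : ℕ) (i j : I) : FreeMonoid I := FreeMonoid.ofList (braidList k i j)

/-- The braid relations defining the Artin–Tits monoid. -/
def artinRel (M : CoxM I) : FreeMonoid I → FreeMonoid I → Prop :=
  fun x y => ∃ i j, M.m i j ≠ 0 ∧ x = braidWord (M.m i j) i j ∧ y = braidWord (M.m i j) j i

/-- The congruence on the free monoid generated by the braid relations. -/
def artinCon (M : CoxM I) : Con (FreeMonoid I) := conGen (artinRel M)

/-- The Artin–Tits monoid `B⁺` of a Coxeter matrix. -/
def AM (M : CoxM I) := (artinCon M).Quotient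

instance (M : CoxM I) : Monoid (AM M) := inferInstanceAs (Monoid (artinCon M).Quotient)

/-- The standard generators of the Artin–Tits monoid. -/
def gen (M : CoxM I) (i : I) : AM M := (artinCon M).mk' (FreeMonoid.of i)

/-- `I(b) = {i ∈ I ∣ s_i ≼ b}`, where `≼` is left divisibility. -/
def IdxSet (M : CoxM I) (x : AM M) : Set I := {i | gen M i ∣ x}

/-- The braid word `s_i s_j s_i ⋯` (`k` letters) in the free group. -/
def braidWordG (k : ℕ) (i j : I) : FreeGroup I := ((braidList k i j).map FreeGroup.of).prod

/-- The braid relators defining the Artin–Tits group. -/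
def artinGRels (M : CoxM I) : Set (FreeGroup I) :=
  {r | ∃ i j, M.m i j ≠ 0 ∧ r = braidWordG (M.m i j) i j * (braidWordG (M.m i j) j i)⁻¹}

/-- The Artin–Tits group `B` of a Coxeter matrix. -/
def AG (M : CoxM I) := PresentedGroup (artinGRels M)

instance (M : CoxM I) : Group (AG M) := inferInstanceAs (Group (PresentedGroup _))

/-- The standard generators of the Artin–Tits group. -/
def ggen (M : CoxM I) (i : I) : AG M := PresentedGroup.of i

/-- The relators defining the Coxeter group. -/
def coxRels (M : CoxM I) : Set (FreeGroup I) :=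
  {r | ∃ i j, M.m i j ≠ 0 ∧ r = (FreeGroup.of i * FreeGroup.of j) ^ (M.m i j)}

/-- The Coxeter group `W` of a Coxeter matrix. -/
def CoxG (M : CoxM I) := PresentedGroup (coxRels M)

instance (M : CoxM I) : Group (CoxG M) := inferInstanceAs (Group (PresentedGroup _))

/-- A Coxeter matrix is spherical if its Coxeter group is finite. -/
def Spherical (M : CoxM I) : Prop := Finite (CoxG M)

/-- Connectedness of the Coxeter graph: there is an edge between `i` and `j`
iff `m i j ∉ {1,2}`. -/
def Connected (M : CoxM I) : Prop :=
  ∀ i j : I, Relation.ReflTransGen (fun a b => M.m a b ≠ 1 ∧ M.m a b ≠ 2) i j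

/-- Restriction of a Coxeter matrix to a subset of the index set. -/
def CoxM.restrictF [DecidableEq I] (M : CoxM I) (J : Finset I) : CoxM {i // i ∈ J} :=
  ⟨fun i j => M.m i j, fun i j => M.symm i j,
   fun i j => (M.one_iff i j).trans (by exact Subtype.coe_inj)⟩

/-- An irreducible affine Coxeter matrix: connected, non-spherical, but every proper
parabolic submatrix is spherical. -/
def Affine [Fintype I] [DecidableEq I] (M : CoxM I) : Prop :=
  Connected M ∧ ¬ Spherical M ∧ ∀ J : Finset I, J ≠ Finset.univ → Spherical (M.restrictF J)

/-! ### The standard root system -/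

section Roots

variable [Fintype I] [DecidableEq I]

/-- The coefficients `-2 cos (π / m i j)` of the standard bilinear form. -/
noncomputable def cf (M : CoxM I) (i j : I) : ℝ := -2 * Real.cos (Real.pi / (M.m i j : ℝ))

/-- The standard symmetric bilinear form `( · | · )` on `E = ⊕ ℝ α_i`. -/
noncomputable def bform (M : CoxM I) (x y : I → ℝ) : ℝ := ∑ i, ∑ j, x i * y j * cf M i j

/-- The simple root `α_i`. -/
def sroot (i : I) : I → ℝ := Pi.single i 1

/-- The simple reflection `s_i` acting on `E`. -/
noncomputable def srefl (M : CoxM I) (i : I) (v : I → ℝ) : I → ℝ :=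
  v - bform M v (sroot i) • sroot i

/-- The roots: the orbit of the simple roots under the reflections. -/
inductive IsRoot (M : CoxM I) : (I → ℝ) → Prop
  | simple (i : I) : IsRoot M (sroot i)
  | srefl (i : I) (v : I → ℝ) : IsRoot M v → IsRoot M (LK.srefl M i v)

/-- The positive roots: roots with nonnegative coordinates. -/
def IsPos (M : CoxM I) (v : I → ℝ) : Prop := IsRoot M v ∧ ∀ i, 0 ≤ v i

/-- The set `Φ⁺` of positive roots, as a type. -/
def Pos (M : CoxM I) := {v : I → ℝ // IsPos M v}

/-- The depth of a positive root: the least number of simple reflections needed to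
send it to a negative vector. -/
noncomputable def dep (M : CoxM I) (v : I → ℝ) : ℕ :=
  sInf {n | ∃ l : List I, l.length = n ∧ ∃ k, l.foldr (srefl M) v k < 0}

theorem isPos_sroot (M : CoxM I) (i : I) : IsPos M (sroot i) :=
  ⟨IsRoot.simple i, fun j => by rw [sroot, Pi.single_apply]; split <;> norm_num⟩

/-- The simple root `α_i` as a positive root. -/
def simplePos (M : CoxM I) (i : I) : Pos M := ⟨sroot i, isPos_sroot M i⟩

/-! ### The Lawrence–Krammer representation -/

variable (M : CoxM I) (R : Type) [CommRing R]

/-- The free module `V` with basis `(e_α)` indexed by the positive roots. -/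
abbrev VV := Pos M →₀ R

/-- The basis vector `e_α` of `V`. -/
noncomputable def ev (α : Pos M) : VV M R := Finsupp.single α 1

open scoped Classical in
/-- The value of the map `φ_i` on the basis vector indexed by `α`. -/
noncomputable def phiAux (a b c d : R) (i : I) (α : Pos M) : VV M R :=
  if α.1 = sroot i then 0
  else if srefl M i α.1 = α.1 then d • ev M R α
  else if h : IsPos M (srefl M i α.1) then
    if dep M α.1 < dep M (srefl M i α.1) then
      a • ev M R α + c • ev M R ⟨srefl M i α.1, h⟩
    else b • ev M R ⟨srefl M i α.1, h⟩
  else 0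

/-- The linear map `φ_i : V → V`. -/
noncomputable def phi (a b c d : R) (i : I) : VV M R →ₗ[R] VV M R :=
  Finsupp.lift (VV M R) R (Pos M) (phiAux M R a b c d i)

/-- The linear map `ψ_i = φ_i + f_i ⊠ e_{α_i}`. -/
noncomputable def psim (a b c d : R) (f : I → (VV M R →ₗ[R] R)) (i : I) :
    VV M R →ₗ[R] VV M R :=
  phi M R a b c d i + (f i).smulRight (ev M R (simplePos M i))

/-- LK-families. -/
structure IsLK (a b c d : R) (f : I → (VV M R →ₗ[R] R)) : Prop where
  diag : ∀ i j, i ≠ j → f i (ev M R (simplePos M j)) = 0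
  rel2 : ∀ i j, M.m i j = 2 → (f i).comp (phi M R a b c d j) = d • f i
  rel3 : ∀ i j, M.m i j = 3 →
    (f i).comp (phi M R a b c d j) = (f j).comp (phi M R a b c d i)

/-- The `R`-module `𝓕` of LK-families. -/
noncomputable def LKFamilies (a b c d : R) : Submodule R (I → (VV M R →ₗ[R] R)) where
  carrier := {f | IsLK M R a b c d f}
  add_mem' := by
    rintro f g ⟨hf1, hf2, hf3⟩ ⟨hg1, hg2, hg3⟩
    refine ⟨fun i j hij => ?_, fun i j hij => ?_, fun i j hij => ?_⟩
    · rw [Pi.add_apply, LinearMap.add_apply, hf1 i j hij, hg1 i j hij, add_zero]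
    · simp only [Pi.add_apply, LinearMap.add_comp, hf2 i j hij, hg2 i j hij, smul_add]
    · simp only [Pi.add_apply, LinearMap.add_comp, hf3 i j hij, hg3 i j hij]
  zero_mem' := by
    refine ⟨fun i j hij => ?_, fun i j hij => ?_, fun i j hij => ?_⟩
    · rw [Pi.zero_apply, LinearMap.zero_apply]
    · simp only [Pi.zero_apply, LinearMap.zero_comp, smul_zero]
    · simp only [Pi.zero_apply, LinearMap.zero_comp]
  smul_mem' := by
    rintro r f ⟨h1, h2, h3⟩
    refine ⟨fun i j hij => ?_, fun i j hij => ?_, fun i j hij => ?_⟩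
    · rw [Pi.smul_apply, LinearMap.smul_apply, h1 i j hij, smul_zero]
    · rw [Pi.smul_apply, LinearMap.smul_comp, h2 i j hij]; exact smul_comm r d (f i)
    · simp only [Pi.smul_apply, LinearMap.smul_comp, h3 i j hij]

end Roots

/-! ### The monoid of binary relations -/

/-- The monoid of binary relations on a set `Ω`, where `β (R * S) α ↔ ∃ γ, β R γ ∧ γ S α`. -/
def Bin (Ω : Type) := Ω → Ω → Prop

instance (Ω : Type) : Monoid (Bin Ω) where
  mul T S := fun x z => ∃ y, T x y ∧ S y z
  one := fun x y => x = y
  mul_assoc T S U := by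
    funext x z
    apply propext
    constructor
    · rintro ⟨y, ⟨u, hTu, hSu⟩, hU⟩; exact ⟨u, hTu, y, hSu, hU⟩
    · rintro ⟨u, hT, y, hS, hU⟩; exact ⟨y, ⟨u, hT, hS⟩, hU⟩
  one_mul T := by
    funext x z
    apply propext
    constructor
    · rintro ⟨y, rfl, h⟩; exact h
    · intro h; exact ⟨x, rfl, h⟩
  mul_one T := by
    funext x z
    apply propext
    constructor
    · rintro ⟨y, h, rfl⟩; exact h
    · intro h; exact ⟨z, h, rfl⟩

/-- `R(Ψ) = {β ∈ Ω ∣ ∃ α ∈ Ψ, β R α}`. -/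
def Bin.image {Ω : Type} (T : Bin Ω) (Ψ : Set Ω) : Set Ω := {x | ∃ y ∈ Ψ, T x y}

/-! ### Further constructions -/

section More

variable [Fintype I] [DecidableEq I]

/-- The map `μ : 𝓕 → 𝔯` in the spherical case. -/
noncomputable def muSph (M : CoxM I) (R : Type) [CommRing R] (a b c d : R) (i0 : I) :
    LKFamilies M R a b c d →ₗ[R] R where
  toFun f := f.1 i0 (ev M R (simplePos M i0))
  map_add' f g := rfl
  map_smul' r f := rfl

/-- A graph automorphism of a Coxeter matrix. -/
def IsAut (M : CoxM I) (g : Equiv.Perm I) : Prop := ∀ i j, M.m (g i) (g j) = M.m i j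

/-- The action of a permutation of `I` on `E = ⊕ ℝ α_i`, sending `α_i` to `α_{g(i)}`. -/
def permE (g : Equiv.Perm I) (v : I → ℝ) : I → ℝ := fun i => v (g.symm i)

open scoped Classical in
/-- The element of `Φ⁺` with given coordinates (junk value if the vector is not
a positive root). -/
noncomputable def posOf (M : CoxM I) [Nonempty I] (v : I → ℝ) : Pos M :=
  if h : IsPos M v then ⟨v, h⟩ else simplePos M (Classical.arbitrary I)

/-- The action of a permutation of `I` on `Φ⁺`. -/
noncomputable def permPos (M : CoxM I) [Nonempty I] (g : Equiv.Perm I) (α : Pos M) : Pos M :=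
  posOf M (permE g α.1)

/-- The action of a permutation of `I` on `V`, permuting the basis `(e_α)`. -/
noncomputable def permV (M : CoxM I) (R : Type) [CommRing R] [Nonempty I] (g : Equiv.Perm I) :
    VV M R →ₗ[R] VV M R :=
  Finsupp.lmapDomain R R (permPos M g)

/-- The submodule `V^G` of fixed points of `V` under a group `G` of permutations of `I`. -/
noncomputable def fixedV (M : CoxM I) (R : Type) [CommRing R] [Nonempty I]
    (G : Subgroup (Equiv.Perm I)) : Submodule R (VV M R) where
  carrier := {v | ∀ g ∈ G, permV M R g v = v}
  add_mem' hx hy g hg := by rw [map_add, hx g hg, hy g hg]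
  zero_mem' g hg := map_zero _
  smul_mem' r v hv g hg := by rw [map_smul, hv g hg]

/-- The submonoid `(B⁺)^G` of fixed points of the Artin–Tits monoid under a group `G`
of permutations of `I` (acting via `actB`). -/
def fixedB (M : CoxM I) (actB : Equiv.Perm I → (AM M →* AM M))
    (G : Subgroup (Equiv.Perm I)) : Submonoid (AM M) where
  carrier := {x | ∀ g ∈ G, actB g x = x}
  one_mem' g hg := map_one _
  mul_mem' hx hy g hg := by rw [map_mul, hx g hg, hy g hg]

/-- The map `μ : 𝓕 → 𝔯^ℕ` in the affine case, defined from the data of the imaginary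
root `δ` and of a pair `(i0, j0)` with `m i0 j0 = 3`. -/
noncomputable def muAff (M : CoxM I) (R : Type) [CommRing R] [Nonempty I] (b c d : R)
    (δ : I → ℝ) (i0 j0 : I) (f : I → (VV M R →ₗ[R] R)) : ℕ → R := fun n =>
  if n % 2 = 0 then f i0 (ev M R (posOf M ((n / 2 : ℕ) • δ + sroot i0)))
  else
    c * d * f i0 (ev M R (posOf M (((n + 1) / 2 : ℕ) • δ - sroot i0)))
      - b * c * f i0 (ev M R (posOf M (((n + 1) / 2 : ℕ) • δ - sroot i0 - sroot j0)))
      - d * d * f j0 (ev M R (posOf M (((n + 1) / 2 : ℕ) • δ - sroot i0 - sroot j0)))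

end More

end LK

/-!
Everything reduces to evaluating `f_i ∘ φ_j` on a basis vector `e_α`, where `φ_j e_α` is
governed by the sign of `(α | α_j)`. For small type every root is positive or negative
(Humphreys' argument through the dihedral subgroups `⟨s_i, s_j⟩`), and for a positive root
`α ≠ α_j` the reflection `s_j` lowers the depth by one when `(α | α_j) > 0` and raises it by one
when `(α | α_j) < 0`. The relations `f_i ∘ φ_j = 𝔡 f_i` (`m_{i,j} = 2`) and
`f_i ∘ φ_j = f_j ∘ φ_i` (`m_{i,j} = 3`) at `e_α` then become identities between the prescribed
values, checked on the signs of `(α | α_i)` and `(α | α_j)` using (C1)–(C7) and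
`𝔞 = 𝔡 − 𝔟𝔠𝔡⁻¹`. The one case that does not close directly, `(α | α_i) = (α | α_j) = 0`, is
handled by induction on the depth: descend along a simple root `α_k` with `(α | α_k) > 0`.
-/

namespace LK

variable {I : Type} {M : CoxM I}

theorem cf_self (M : CoxM I) (i : I) : cf M i i = 2 := by
  rw [cf, (M.one_iff i i).mpr rfl]
  norm_num

theorem cf_comm (M : CoxM I) (i j : I) : cf M i j = cf M j i := by rw [cf, cf, M.symm]

theorem cf_of_m_eq_two {i j : I} (h : M.m i j = 2) : cf M i j = 0 := by
  rw [cf, h]; norm_num [Real.cos_pi_div_two]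

theorem cf_of_m_eq_three {i j : I} (h : M.m i j = 3) : cf M i j = -1 := by
  rw [cf, h]; norm_num [Real.cos_pi_div_three]

theorem ne_of_m_eq_two {i j : I} (h : M.m i j = 2) : i ≠ j := by
  rintro rfl; rw [(M.one_iff i i).mpr rfl] at h; omega

theorem CoxM.Small.m_eq_two_or_three (hs : M.Small) {i j : I} (h : i ≠ j) :
    M.m i j = 2 ∨ M.m i j = 3 :=
  (hs i j).resolve_left fun h1 => h ((M.one_iff i j).mp h1)

theorem cf_nonpos (hs : M.Small) {i j : I} (h : i ≠ j) : cf M i j ≤ 0 := by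
  rcases hs.m_eq_two_or_three h with h2 | h3
  · rw [cf_of_m_eq_two h2]
  · rw [cf_of_m_eq_three h3]; norm_num

section Form

variable [Fintype I] (M)

theorem bform_add_left (x y z : I → ℝ) : bform M (x + y) z = bform M x z + bform M y z := by
  simp only [bform, Pi.add_apply, add_mul, Finset.sum_add_distrib]

theorem bform_smul_left (r : ℝ) (x z : I → ℝ) : bform M (r • x) z = r * bform M x z := by
  simp only [bform, Pi.smul_apply, smul_eq_mul, Finset.mul_sum, mul_assoc]

theorem bform_neg_left (x z : I → ℝ) : bform M (-x) z = -bform M x z := by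
  simpa using bform_smul_left M (-1) x z

theorem bform_sub_left (x y z : I → ℝ) : bform M (x - y) z = bform M x z - bform M y z := by
  rw [sub_eq_add_neg, bform_add_left, bform_neg_left, sub_eq_add_neg]

theorem bform_comm (x y : I → ℝ) : bform M x y = bform M y x := by
  rw [bform, bform, Finset.sum_comm]
  refine Finset.sum_congr rfl fun j _ => Finset.sum_congr rfl fun i _ => ?_
  rw [cf_comm M j i]; ring

end Form

section Reflection

variable [DecidableEq I]

theorem sroot_apply_self (i : I) : sroot i i = (1 : ℝ) := by simp [sroot]

theorem sroot_apply_of_ne {i m : I} (h : m ≠ i) : sroot i m = (0 : ℝ) := by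
  simp [sroot, h]

theorem sroot_nonneg (i m : I) : (0 : ℝ) ≤ sroot i m := by
  rcases eq_or_ne m i with rfl | h
  · rw [sroot_apply_self]; exact zero_le_one
  · rw [sroot_apply_of_ne h]

variable [Fintype I] (M)

theorem bform_sroot_right (v : I → ℝ) (i : I) : bform M v (sroot i) = ∑ m, v m * cf M m i := by
  refine Finset.sum_congr rfl fun m _ => ?_
  rw [Finset.sum_eq_single i (fun j _ hj => by simp [sroot, hj]) (by simp)]
  simp [sroot]

theorem bform_sroot_sroot (i j : I) : bform M (sroot i) (sroot j) = cf M i j := by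
  rw [bform_sroot_right, Finset.sum_eq_single i (fun m _ hm => by simp [sroot, hm]) (by simp)]
  simp [sroot]

theorem bform_sroot_self (i : I) : bform M (sroot i) (sroot i) = 2 := by
  rw [bform_sroot_sroot, cf_self]

theorem srefl_apply_of_ne (i : I) (v : I → ℝ) {m : I} (h : m ≠ i) : srefl M i v m = v m := by
  simp [srefl, sroot_apply_of_ne h]

theorem srefl_apply_self (i : I) (v : I → ℝ) : srefl M i v i = v i - bform M v (sroot i) := by
  simp [srefl, sroot_apply_self]

theorem bform_srefl_left (i : I) (v : I → ℝ) (x : I) :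
    bform M (srefl M i v) (sroot x) = bform M v (sroot x) - bform M v (sroot i) * cf M i x := by
  rw [srefl, bform_sub_left, bform_smul_left, bform_sroot_sroot]

theorem bform_srefl_self (i : I) (v : I → ℝ) :
    bform M (srefl M i v) (sroot i) = -bform M v (sroot i) := by
  rw [bform_srefl_left, cf_self]; ring

@[simp]
theorem srefl_srefl (i : I) (v : I → ℝ) : srefl M i (srefl M i v) = v := by
  rw [srefl.eq_1 M i (srefl M i v), bform_srefl_self, srefl, neg_smul, sub_neg_eq_add,
    sub_add_cancel]

theorem bform_srefl_srefl (i : I) (u v : I → ℝ) :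
    bform M (srefl M i u) (srefl M i v) = bform M u v := by
  rw [srefl.eq_1 M i v, bform_comm, bform_sub_left, bform_smul_left, bform_comm M (sroot i),
    bform_srefl_self, bform_comm M v, srefl, bform_sub_left, bform_smul_left, bform_comm M v]
  ring

theorem srefl_add (i : I) (x y : I → ℝ) : srefl M i (x + y) = srefl M i x + srefl M i y := by
  simp only [srefl, bform_add_left, add_smul]; abel

theorem srefl_neg (i : I) (x : I → ℝ) : srefl M i (-x) = -srefl M i x := by
  simp only [srefl, bform_neg_left, neg_smul]; abel

variable {M}

theorem srefl_of_bform_eq_zero {i : I} {v : I → ℝ} (h : bform M v (sroot i) = 0) :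
    srefl M i v = v := by
  rw [srefl, h, zero_smul, sub_zero]

theorem srefl_eq_self_iff {i : I} {v : I → ℝ} : srefl M i v = v ↔ bform M v (sroot i) = 0 := by
  refine ⟨fun h => ?_, srefl_of_bform_eq_zero⟩
  have := congrFun h i
  rw [srefl_apply_self] at this
  linarith

theorem srefl_sroot_self (i : I) : srefl M i (sroot i) = -sroot i := by
  rw [srefl, bform_sroot_self, two_smul]; abel

theorem srefl_sroot_of_m_eq_two {i j : I} (h : M.m i j = 2) : srefl M j (sroot i) = sroot i :=
  srefl_of_bform_eq_zero (by rw [bform_sroot_sroot, cf_of_m_eq_two h])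

theorem srefl_sroot_of_m_eq_three {i j : I} (h : M.m i j = 3) :
    srefl M j (sroot i) = sroot i + sroot j := by
  rw [srefl, bform_sroot_sroot, cf_of_m_eq_three h, neg_one_smul, sub_neg_eq_add]

theorem srefl_sroot_add_sroot_of_m_eq_three {i j : I} (h : M.m i j = 3) :
    srefl M i (sroot i + sroot j) = sroot j := by
  rw [add_comm, ← srefl_sroot_of_m_eq_three ((M.symm j i).trans h), srefl_srefl]

theorem srefl_comm_of_m_eq_two {i j : I} (h : M.m i j = 2) (v : I → ℝ) :
    srefl M i (srefl M j v) = srefl M j (srefl M i v) := by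
  have hij := cf_of_m_eq_two h
  have hji : cf M j i = 0 := by rw [cf_comm, hij]
  simp only [srefl, bform_sub_left, bform_smul_left, bform_sroot_sroot, hij, hji]
  simp only [mul_zero, sub_zero]; abel

theorem srefl_braid_of_m_eq_three {i j : I} (h : M.m i j = 3) (v : I → ℝ) :
    srefl M i (srefl M j (srefl M i v)) = srefl M j (srefl M i (srefl M j v)) := by
  have hij := cf_of_m_eq_three h
  have hji : cf M j i = -1 := by rw [cf_comm, hij]
  simp only [srefl, bform_sub_left, bform_smul_left, bform_sroot_sroot, hij, hji, cf_self]
  ext m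
  simp only [Pi.sub_apply, Pi.smul_apply, smul_eq_mul]
  ring

theorem bform_srefl_of_m_eq_two {i j : I} (h : M.m j i = 2) (v : I → ℝ) :
    bform M (srefl M j v) (sroot i) = bform M v (sroot i) := by
  rw [bform_srefl_left, cf_of_m_eq_two h]; ring

theorem bform_srefl_of_m_eq_three {i j : I} (h : M.m j i = 3) (v : I → ℝ) :
    bform M (srefl M j v) (sroot i) = bform M v (sroot i) + bform M v (sroot j) := by
  rw [bform_srefl_left, cf_of_m_eq_three h]; ring

theorem isRoot_srefl_iff {i : I} {v : I → ℝ} : IsRoot M (srefl M i v) ↔ IsRoot M v :=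
  ⟨fun h => by simpa using h.srefl i, IsRoot.srefl i v⟩

theorem IsRoot.bform_self {v : I → ℝ} (h : IsRoot M v) : bform M v v = 2 := by
  induction h with
  | simple i => exact bform_sroot_self M i
  | srefl i v _ ih => rw [bform_srefl_srefl, ih]

end Reflection

section RootSystem

variable [Fintype I] [DecidableEq I]

/-- The word `[x₁, …, xₙ]` acts on `E` as `s_{x₁} ∘ ⋯ ∘ s_{xₙ}`. -/
noncomputable def act (M : CoxM I) (l : List I) (v : I → ℝ) : I → ℝ := l.foldr (srefl M) v

@[simp]
theorem act_nil (v : I → ℝ) : act M [] v = v := rfl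

@[simp]
theorem act_cons (x : I) (l : List I) (v : I → ℝ) : act M (x :: l) v = srefl M x (act M l v) :=
  rfl

@[simp]
theorem act_append (l l' : List I) (v : I → ℝ) : act M (l ++ l') v = act M l (act M l' v) := by
  induction l with
  | nil => rfl
  | cons x xs ih => simp [ih]

theorem act_add (l : List I) (x y : I → ℝ) : act M l (x + y) = act M l x + act M l y := by
  induction l with
  | nil => rfl
  | cons a as ih => simp [ih, srefl_add]

theorem act_neg (l : List I) (x : I → ℝ) : act M l (-x) = -act M l x := by
  induction l with
  | nil => rfl
  | cons a as ih => simp [ih, srefl_neg]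

theorem act_append_congr {l l' : List I} (h : act M l = act M l') (c : List I) :
    act M (l ++ c) = act M (l' ++ c) := by
  funext v; simp [h]

theorem act_append_pair (l : List I) (x : I) : act M (l ++ [x, x]) = act M l := by
  funext v; simp

theorem IsRoot.exists_eq_act {v : I → ℝ} (h : IsRoot M v) : ∃ l i, v = act M l (sroot i) := by
  induction h with
  | simple i => exact ⟨[], i, rfl⟩
  | srefl i v _ ih =>
    obtain ⟨l, m, rfl⟩ := ih
    exact ⟨i :: l, m, rfl⟩

theorem IsRoot.exists_act_apply_neg {v : I → ℝ} (h : IsRoot M v) :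
    ∃ l : List I, ∃ k, act M l v k < 0 := by
  induction h with
  | simple i => exact ⟨[i], i, by simp [srefl_sroot_self, sroot_apply_self]⟩
  | srefl i v _ ih =>
    obtain ⟨l, k, hk⟩ := ih
    exact ⟨l ++ [i], k, by simpa using hk⟩

/-! ### Depth -/

theorem dep_le {v : I → ℝ} {l : List I} {k : I} (hk : act M l v k < 0) : dep M v ≤ l.length :=
  Nat.sInf_le ⟨l, rfl, k, hk⟩

theorem IsRoot.exists_length_eq_dep {v : I → ℝ} (h : IsRoot M v) :
    ∃ l : List I, l.length = dep M v ∧ ∃ k, act M l v k < 0 :=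
  let ⟨l, k, hk⟩ := h.exists_act_apply_neg
  Nat.sInf_mem (s := {n | ∃ l : List I, l.length = n ∧ ∃ k, act M l v k < 0}) ⟨_, l, rfl, k, hk⟩

theorem IsPos.one_le_dep {v : I → ℝ} (h : IsPos M v) : 1 ≤ dep M v := by
  obtain ⟨l, hl, k, hk⟩ := h.1.exists_length_eq_dep
  rcases l with _ | ⟨x, l⟩
  · exact absurd hk (not_lt.mpr (h.2 k))
  · simp [← hl]

theorem dep_sroot (i : I) : dep M (sroot i) = 1 :=
  le_antisymm (dep_le (l := [i]) (k := i) (by simp [srefl_sroot_self, sroot_apply_self]))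
    (isPos_sroot M i).one_le_dep

theorem dep_srefl_le {v : I → ℝ} (hv : IsRoot M v) (x : I) :
    dep M (srefl M x v) ≤ dep M v + 1 := by
  obtain ⟨l, hl, k, hk⟩ := hv.exists_length_eq_dep
  have := dep_le (M := M) (l := l ++ [x]) (v := srefl M x v) (k := k) (by simpa using hk)
  simpa [hl] using this

theorem dep_le_dep_srefl {v : I → ℝ} (hv : IsRoot M v) (x : I) :
    dep M v ≤ dep M (srefl M x v) + 1 := by
  simpa using dep_srefl_le ((isRoot_srefl_iff (i := x)).mpr hv) x

/-! ### Length of the group element represented by a word -/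

/-- The length of the element of `W` represented by `l`, elements of `W` being compared
through their action on `E`. -/
noncomputable def wordLen (M : CoxM I) (l : List I) : ℕ :=
  sInf {n | ∃ l' : List I, l'.length = n ∧ act M l' = act M l}

theorem wordLen_le_of_act_eq {l l' : List I} (h : act M l' = act M l) :
    wordLen M l ≤ l'.length :=
  Nat.sInf_le ⟨l', rfl, h⟩

theorem wordLen_congr {l l' : List I} (h : act M l = act M l') : wordLen M l = wordLen M l' := by
  simp only [wordLen, h]

theorem exists_length_eq_wordLen (l : List I) :
    ∃ l' : List I, act M l' = act M l ∧ l'.length = wordLen M l := by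
  obtain ⟨l', h1, h2⟩ := Nat.sInf_mem (s := {n | ∃ l' : List I, l'.length = n ∧
    act M l' = act M l}) ⟨_, l, rfl, rfl⟩
  exact ⟨l', h2, h1⟩

theorem wordLen_append_le (l c : List I) : wordLen M (l ++ c) ≤ wordLen M l + c.length := by
  obtain ⟨l', hl', hlen⟩ := exists_length_eq_wordLen (M := M) l
  simpa [hlen] using wordLen_le_of_act_eq (act_append_congr hl' c)

/-! ### Dihedral subgroups -/

theorem exists_mem_act_eq_of_closed {i t : I} {S : List (List I)} (h0 : [] ∈ S)
    (hS : ∀ s ∈ S, ∀ x ∈ [i, t],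
      ∃ s' ∈ S, act M s' = act M (x :: s) ∧ s'.length ≤ s.length + 1) :
    ∀ c : List I, (∀ x ∈ c, x = i ∨ x = t) →
      ∃ s ∈ S, act M s = act M c ∧ s.length ≤ c.length := by
  intro c hc
  induction c with
  | nil => exact ⟨[], h0, rfl, le_rfl⟩
  | cons x c ih =>
    obtain ⟨s, hs, hsc, hlen⟩ := ih fun y hy => hc y (List.mem_cons_of_mem x hy)
    obtain ⟨s', hs', hs's, hlen'⟩ := hS s hs x (by simpa using hc x List.mem_cons_self)
    refine ⟨s', hs', ?_, by simp; omega⟩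
    rw [hs's]; funext v; simp [hsc]

theorem dihedral_dichotomy_of_m_eq_two {i t : I} (h2 : M.m i t = 2) (c : List I)
    (hc : ∀ x ∈ c, x = i ∨ x = t) :
    act M c (sroot i) ∈ ({sroot i, sroot t, sroot i + sroot t} : Set (I → ℝ)) ∨
      ∃ c' : List I, act M (c ++ [i]) = act M c' ∧ c'.length < c.length := by
  -- the reduced words of the dihedral group of order 4
  obtain ⟨s, hmem, hsc, hlen⟩ := exists_mem_act_eq_of_closed (M := M)
    (S := [[], [i], [t], [i, t]]) (by simp) (by
      simp only [List.mem_cons, List.not_mem_nil, or_false, forall_eq_or_imp, forall_eq]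
      refine ⟨⟨?_, ?_⟩, ⟨?_, ?_⟩, ⟨?_, ?_⟩, ⟨?_, ?_⟩⟩ <;>
      first
      | (refine ⟨[], by simp, ?_, by simp⟩; funext v; simp [srefl_comm_of_m_eq_two h2]; done)
      | (refine ⟨[i], by simp, ?_, by simp⟩; funext v; simp [srefl_comm_of_m_eq_two h2]; done)
      | (refine ⟨[t], by simp, ?_, by simp⟩; funext v; simp [srefl_comm_of_m_eq_two h2]; done)
      | (refine ⟨[i, t], by simp, ?_, by simp⟩; funext v; simp [srefl_comm_of_m_eq_two h2])) c hc
  have hci := act_append_congr hsc.symm [i]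
  simp only [List.mem_cons, List.not_mem_nil, or_false] at hmem
  rcases hmem with rfl | rfl | rfl | rfl
  · left; simp [← hsc]
  · right; exact ⟨[], by rw [hci]; funext v; simp, by simp at hlen ⊢; omega⟩
  · left; simp [← hsc, srefl_sroot_of_m_eq_two h2]
  · right
    refine ⟨[t], by rw [hci]; funext v; simp [srefl_comm_of_m_eq_two h2], by simp at hlen ⊢; omega⟩

theorem dihedral_dichotomy_of_m_eq_three {i t : I} (h3 : M.m i t = 3) (c : List I)
    (hc : ∀ x ∈ c, x = i ∨ x = t) :
    act M c (sroot i) ∈ ({sroot i, sroot t, sroot i + sroot t} : Set (I → ℝ)) ∨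
      ∃ c' : List I, act M (c ++ [i]) = act M c' ∧ c'.length < c.length := by
  -- the reduced words of the dihedral group of order 6
  obtain ⟨s, hmem, hsc, hlen⟩ := exists_mem_act_eq_of_closed (M := M)
    (S := [[], [i], [t], [i, t], [t, i], [i, t, i]]) (by simp) (by
      simp only [List.mem_cons, List.not_mem_nil, or_false, forall_eq_or_imp, forall_eq]
      refine ⟨⟨?_, ?_⟩, ⟨?_, ?_⟩, ⟨?_, ?_⟩, ⟨?_, ?_⟩, ⟨?_, ?_⟩, ⟨?_, ?_⟩⟩ <;>
      first
      | (refine ⟨[], by simp, ?_, by simp⟩; funext v; simp [srefl_braid_of_m_eq_three h3]; done)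
      | (refine ⟨[i], by simp, ?_, by simp⟩; funext v; simp [srefl_braid_of_m_eq_three h3]; done)
      | (refine ⟨[t], by simp, ?_, by simp⟩; funext v; simp [srefl_braid_of_m_eq_three h3]; done)
      | (refine ⟨[i, t], by simp, ?_, by simp⟩; funext v; simp [srefl_braid_of_m_eq_three h3];
          done)
      | (refine ⟨[t, i], by simp, ?_, by simp⟩; funext v; simp [srefl_braid_of_m_eq_three h3];
          done)
      | (refine ⟨[i, t, i], by simp, ?_, by simp⟩; funext v;
          simp [srefl_braid_of_m_eq_three h3])) c hc
  have hci := act_append_congr hsc.symm [i]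
  simp only [List.mem_cons, List.not_mem_nil, or_false] at hmem
  rcases hmem with rfl | rfl | rfl | rfl | rfl | rfl
  · left; simp [← hsc]
  · right; exact ⟨[], by rw [hci]; funext v; simp, by simp at hlen ⊢; omega⟩
  · left; simp [← hsc, srefl_sroot_of_m_eq_three h3]
  · left; simp [← hsc, srefl_sroot_of_m_eq_three h3, srefl_sroot_add_sroot_of_m_eq_three h3]
  · right; exact ⟨[t], by rw [hci]; funext v; simp, by simp at hlen ⊢; omega⟩
  · right; exact ⟨[i, t], by rw [hci]; funext v; simp, by simp at hlen ⊢; omega⟩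

/-- In the dihedral group `⟨s_i, s_t⟩`, the image of `α_i` under an element `w` is one of
`α_i, α_t, α_i + α_t`, unless `w s_i` is shorter than `w`. -/
theorem dihedral_dichotomy (hs : M.Small) {i t : I} (hit : i ≠ t) (c : List I)
    (hc : ∀ x ∈ c, x = i ∨ x = t) :
    act M c (sroot i) ∈ ({sroot i, sroot t, sroot i + sroot t} : Set (I → ℝ)) ∨
      ∃ c' : List I, act M (c ++ [i]) = act M c' ∧ c'.length < c.length := by
  rcases hs.m_eq_two_or_three hit with h2 | h3
  · exact dihedral_dichotomy_of_m_eq_two h2 c hc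
  · exact dihedral_dichotomy_of_m_eq_three h3 c hc

theorem exists_minimal_coset_decomposition (i t : I) (l : List I) :
    ∃ u c : List I, (∀ x ∈ c, x = i ∨ x = t) ∧ act M l = act M (u ++ c) ∧
      wordLen M u + c.length ≤ wordLen M l ∧
      wordLen M u ≤ wordLen M (u ++ [i]) ∧ wordLen M u ≤ wordLen M (u ++ [t]) := by
  by_cases hdesc : ∃ x, (x = i ∨ x = t) ∧ wordLen M (l ++ [x]) < wordLen M l
  · obtain ⟨x, hx, hlt⟩ := hdesc
    obtain ⟨u, c, hc, hact, hlen, hi, ht⟩ := exists_minimal_coset_decomposition i t (l ++ [x])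
    refine ⟨u, c ++ [x], ?_, ?_, ?_, hi, ht⟩
    · simpa [or_imp, forall_and] using ⟨hc, hx⟩
    · rw [← act_append_pair l x, ← List.singleton_append, ← List.append_assoc,
        act_append_congr hact, List.append_assoc]
    · simp only [List.length_append, List.length_singleton]
      omega
  · simp only [not_exists, not_and, not_lt] at hdesc
    exact ⟨l, [], by simp, by simp, by simp, hdesc i (.inl rfl), hdesc t (.inr rfl)⟩
termination_by wordLen M l

/-- If `w s_i > w` then `w(α_i) ≥ 0` [Humphreys, *Reflection groups and Coxeter groups*,
Thm. 5.4]. -/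
theorem act_sroot_nonneg_of_wordLen_le (hs : M.Small) (l : List I) (i : I)
    (hl : wordLen M l ≤ wordLen M (l ++ [i])) (m : I) : 0 ≤ act M l (sroot i) m := by
  obtain ⟨r, hr, hrlen⟩ := exists_length_eq_wordLen (M := M) l
  rcases r.eq_nil_or_concat with rfl | ⟨L, t, rfl⟩
  · rw [← hr]; exact sroot_nonneg i m
  have hlt : wordLen M (l ++ [t]) < wordLen M l := by
    have : act M L = act M (l ++ [t]) := by
      rw [← act_append_congr hr, List.concat_eq_append, List.append_assoc, List.singleton_append,
        act_append_pair]
    have := wordLen_le_of_act_eq this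
    simp only [List.concat_eq_append, List.length_append, List.length_singleton] at hrlen
    omega
  have hit : i ≠ t := by rintro rfl; omega
  -- `w = u c` with `c ∈ ⟨s_i, s_t⟩`; as `s_t` is a right descent of `w`, `c ≠ 1` and `u` is shorter
  obtain ⟨u, c, hc, hact, hlen, hi, ht⟩ := exists_minimal_coset_decomposition i t l
  have hcne : c ≠ [] := by
    rintro rfl
    rw [List.append_nil] at hact
    rw [wordLen_congr hact, wordLen_congr (act_append_congr hact [t])] at hlt
    omega
  have hu : wordLen M u < wordLen M l := by
    have := List.length_pos_of_ne_nil hcne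
    omega
  have hui := act_sroot_nonneg_of_wordLen_le hs u i hi
  have hut := act_sroot_nonneg_of_wordLen_le hs u t ht
  rcases dihedral_dichotomy hs hit c hc with hmem | ⟨c', hc', hc'len⟩
  · rw [hact, act_append]
    rcases hmem with hci | hci | hci <;> rw [hci]
    · exact hui m
    · exact hut m
    · rw [act_add]; exact add_nonneg (hui m) (hut m)
  · have hact' : act M (l ++ [i]) = act M (u ++ c') := by
      rw [act_append_congr hact, List.append_assoc]
      funext v; simp [← hc']
    have := wordLen_append_le (M := M) u c'
    rw [← wordLen_congr hact'] at this
    omega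
termination_by wordLen M l

theorem IsRoot.nonneg_or_nonpos (hs : M.Small) {v : I → ℝ} (hv : IsRoot M v) :
    (∀ m, 0 ≤ v m) ∨ (∀ m, v m ≤ 0) := by
  obtain ⟨l, i, rfl⟩ := hv.exists_eq_act
  by_cases hl : wordLen M l ≤ wordLen M (l ++ [i])
  · exact .inl (act_sroot_nonneg_of_wordLen_le hs l i hl)
  · refine .inr fun m => ?_
    have hl' : wordLen M (l ++ [i]) ≤ wordLen M (l ++ [i] ++ [i]) := by
      rw [List.append_assoc, List.singleton_append, wordLen_congr (act_append_pair l i)]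
      omega
    have := act_sroot_nonneg_of_wordLen_le hs _ i hl' m
    rw [act_append] at this
    simpa [srefl_sroot_self, act_neg] using this

/-! ### Positive roots and depth -/

theorem ne_sroot_of_bform_nonpos {v : I → ℝ} {i : I} (h : bform M v (sroot i) ≤ 0) :
    v ≠ sroot i := by
  rintro rfl; rw [bform_sroot_self] at h; norm_num at h

theorem eq_of_bform_sroot_pos (hs : M.Small) {k j : I} (h : 0 < bform M (sroot k) (sroot j)) :
    k = j := by
  by_contra hkj
  rw [bform_sroot_sroot] at h
  exact (cf_nonpos hs hkj).not_gt h

theorem IsPos.srefl_of_ne (hs : M.Small) {v : I → ℝ} (hv : IsPos M v) {i : I}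
    (hne : v ≠ sroot i) : IsPos M (srefl M i v) := by
  have hroot := IsRoot.srefl i v hv.1
  refine ⟨hroot, (hroot.nonneg_or_nonpos hs).resolve_right fun hneg => hne ?_⟩
  -- `v` is then supported on `i`, and `(v | v) = 2` forces `v = α_i`
  have hvi : v = v i • sroot i := by
    ext m
    rcases eq_or_ne m i with rfl | hm
    · simp [sroot_apply_self]
    · have := hneg m
      rw [srefl_apply_of_ne M i v hm] at this
      simp [sroot_apply_of_ne hm, le_antisymm this (hv.2 m)]
  have hnorm := hv.1.bform_self
  rw [hvi, bform_smul_left, bform_comm, bform_smul_left, bform_sroot_self] at hnorm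
  have : v i = 1 := by nlinarith [hv.2 i]
  rwa [this, one_smul] at hvi

theorem IsPos.srefl_ne_sroot {v : I → ℝ} (hv : IsPos M v) (i : I) : srefl M i v ≠ sroot i := by
  intro h
  have := hv.2 i
  rw [← srefl_srefl M i v, h, srefl_sroot_self, Pi.neg_apply, sroot_apply_self] at this
  norm_num at this

theorem IsPos.exists_dep_srefl_add_one (hs : M.Small) {v : I → ℝ} (hv : IsPos M v) :
    ∃ k, dep M (srefl M k v) + 1 = dep M v ∧ (v = sroot k ∨ IsPos M (srefl M k v)) := by
  obtain ⟨l, hl, m, hm⟩ := hv.1.exists_length_eq_dep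
  rcases l.eq_nil_or_concat with rfl | ⟨L, k, rfl⟩
  · exact absurd hm (not_lt.mpr (hv.2 m))
  have hle : dep M (srefl M k v) ≤ L.length := dep_le (k := m) (by simpa using hm)
  have hge := dep_le_dep_srefl hv.1 k
  simp only [List.concat_eq_append, List.length_append, List.length_singleton] at hl
  refine ⟨k, by omega, ?_⟩
  by_cases hvk : v = sroot k
  · exact .inl hvk
  · exact .inr (hv.srefl_of_ne hs hvk)

theorem IsPos.two_le_dep (hs : M.Small) {v : I → ℝ} (hv : IsPos M v) {j : I}
    (hpos : 0 < bform M v (sroot j)) (hne : v ≠ sroot j) : 2 ≤ dep M v := by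
  obtain ⟨k, hk, rfl | hpos'⟩ := hv.exists_dep_srefl_add_one hs
  · exact absurd (by rw [eq_of_bform_sroot_pos hs hpos]) hne
  · have := hpos'.one_le_dep
    omega

theorem dep_srefl_lt_step_of_m_eq_two (hs : M.Small) {v β : I → ℝ} {i k : I}
    (h2 : M.m k i = 2) (hβ : IsPos M β) (hvβ : v = srefl M k β) (hk : dep M β + 1 = dep M v)
    (hpos : 0 < bform M v (sroot i)) (hne : v ≠ sroot i)
    (IH : ∀ w, IsPos M w → dep M w < dep M v → ∀ x, 0 < bform M w (sroot x) → w ≠ sroot x →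
      dep M (srefl M x w) < dep M w) :
    dep M (srefl M i v) < dep M v := by
  have hβi : bform M β (sroot i) = bform M v (sroot i) := by
    rw [hvβ, bform_srefl_of_m_eq_two h2]
  have hβs : β ≠ sroot i := by
    rintro rfl
    exact hne (by rw [hvβ, srefl_sroot_of_m_eq_two ((M.symm i k).trans h2)])
  have := IH β hβ (by omega) i (hβi ▸ hpos) hβs
  have hup := dep_srefl_le (hβ.srefl_of_ne hs hβs).1 k
  rw [srefl_comm_of_m_eq_two h2, ← hvβ] at hup
  omega

theorem dep_srefl_lt_step_of_m_eq_three (hs : M.Small) {v β : I → ℝ} {i k : I}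
    (h3 : M.m k i = 3) (hβ : IsPos M β) (hvβ : v = srefl M k β) (hk : dep M β + 1 = dep M v)
    (hp : 0 < bform M v (sroot k)) (hpos : 0 < bform M v (sroot i))
    (IH : ∀ w, IsPos M w → dep M w < dep M v → ∀ x, 0 < bform M w (sroot x) → w ≠ sroot x →
      dep M (srefl M x w) < dep M w) :
    dep M (srefl M i v) < dep M v := by
  have h3' : M.m i k = 3 := (M.symm i k).trans h3
  have hik : cf M i k = -1 := cf_of_m_eq_three h3'
  have hβk : bform M β (sroot k) = -bform M v (sroot k) := by rw [hvβ, bform_srefl_self, neg_neg]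
  have hβi : bform M β (sroot i) = bform M v (sroot i) + bform M v (sroot k) := by
    rw [hvβ, bform_srefl_of_m_eq_three h3, bform_srefl_self]; ring
  by_cases hβs : β = sroot i
  · subst hβs
    have hvs : v = sroot i + sroot k := by rw [hvβ, srefl_sroot_of_m_eq_three h3']
    rw [hvs, srefl_sroot_add_sroot_of_m_eq_three h3', ← hvs, ← hk, dep_sroot, dep_sroot]
    norm_num
  have hδ := hβ.srefl_of_ne hs hβs
  have hδk : bform M (srefl M i β) (sroot k) = bform M v (sroot i) := by
    rw [bform_srefl_left, hβk, hβi, hik]; ring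
  have hδne : srefl M i β ≠ sroot k := by
    intro h
    have hβv : β = sroot k + sroot i := by
      rw [← srefl_srefl M i β, h, srefl_sroot_of_m_eq_three h3]
    rw [hβv, bform_add_left, bform_sroot_self, bform_sroot_sroot, hik] at hβk
    linarith
  have hδdep := IH β hβ (by omega) i (by linarith) hβs
  have hεdep := IH _ hδ (by omega) k (by rw [hδk]; exact hpos) hδne
  have hbraid : srefl M i v = srefl M k (srefl M i (srefl M k (srefl M i β))) := by
    rw [hvβ]
    nth_rewrite 1 [← srefl_srefl M i β]
    exact srefl_braid_of_m_eq_three h3' _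
  have hroot := IsRoot.srefl k _ hδ.1
  have := dep_srefl_le hroot i
  have := dep_srefl_le (IsRoot.srefl i _ hroot) k
  rw [← hbraid] at this
  omega

theorem IsPos.dep_srefl_lt (hs : M.Small) {v : I → ℝ} (hv : IsPos M v) {i : I}
    (hpos : 0 < bform M v (sroot i)) (hne : v ≠ sroot i) :
    dep M (srefl M i v) < dep M v := by
  obtain ⟨k, hk, rfl | hβ⟩ := hv.exists_dep_srefl_add_one hs
  · exact absurd (by rw [eq_of_bform_sroot_pos hs hpos]) hne
  by_cases hki : k = i
  · subst hki; omega
  have IH : ∀ w, IsPos M w → dep M w < dep M v → ∀ x, 0 < bform M w (sroot x) → w ≠ sroot x →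
      dep M (srefl M x w) < dep M w :=
    fun w hw hlt x hx hwx => hw.dep_srefl_lt hs hx hwx
  have hvβ : v = srefl M k (srefl M k v) := (srefl_srefl M k v).symm
  -- the last reflection `s_k` of a minimal word for `v` has `(v | α_k) > 0`
  have hp : 0 < bform M v (sroot k) := by
    rcases lt_trichotomy (bform M v (sroot k)) 0 with hneg | h0 | hp
    · have := IH _ hβ (by omega) k (by rw [bform_srefl_self]; linarith) (hv.srefl_ne_sroot k)
      rw [srefl_srefl] at this
      omega
    · rw [srefl_of_bform_eq_zero h0] at hk
      omega
    · exact hp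
  rcases hs.m_eq_two_or_three hki with h2 | h3
  · exact dep_srefl_lt_step_of_m_eq_two hs h2 hβ hvβ hk hpos hne IH
  · exact dep_srefl_lt_step_of_m_eq_three hs h3 hβ hvβ hk hp hpos IH
termination_by dep M v

theorem IsPos.dep_srefl_add_one_of_bform_pos (hs : M.Small) {v : I → ℝ} (hv : IsPos M v)
    {i : I} (hpos : 0 < bform M v (sroot i)) (hne : v ≠ sroot i) :
    dep M (srefl M i v) + 1 = dep M v := by
  have := hv.dep_srefl_lt hs hpos hne
  have := dep_le_dep_srefl hv.1 i
  omega

theorem IsPos.dep_srefl_of_bform_neg (hs : M.Small) {v : I → ℝ} (hv : IsPos M v) {i : I}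
    (hneg : bform M v (sroot i) < 0) : dep M (srefl M i v) = dep M v + 1 := by
  have hw := hv.srefl_of_ne hs (ne_sroot_of_bform_nonpos hneg.le)
  have := hw.dep_srefl_lt hs (by rw [bform_srefl_self]; linarith) (hv.srefl_ne_sroot i)
  rw [srefl_srefl] at this
  have := dep_srefl_le hv.1 i
  omega

@[simp]
theorem simplePos_val (i : I) : (simplePos M i).1 = sroot i := rfl

theorem Pos.exists_srefl (hs : M.Small) (α : Pos M) {j : I} (hne : α.1 ≠ sroot j) :
    ∃ β : Pos M, β.1 = srefl M j α.1 :=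
  ⟨⟨_, α.2.srefl_of_ne hs hne⟩, rfl⟩

theorem IsPos.exists_bform_sroot_pos {v : I → ℝ} (hv : IsPos M v) :
    ∃ k, 0 < bform M v (sroot k) := by
  by_contra! h
  have hself : bform M v v = ∑ m, v m * bform M v (sroot m) := by
    rw [bform, Finset.sum_comm]
    simp only [bform_sroot_right, Finset.mul_sum]
    exact Finset.sum_congr rfl fun _ _ => Finset.sum_congr rfl fun _ _ => by ring
  have := Finset.sum_nonpos fun m (_ : m ∈ Finset.univ) =>
    mul_nonpos_of_nonneg_of_nonpos (hv.2 m) (h m)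
  linarith [hv.1.bform_self]

theorem IsPos.bform_add_add_nonpos (hs : M.Small) {v : I → ℝ} (hv : IsPos M v) {i j k : I}
    (hij : M.m i j = 3) (hik : M.m i k = 3) (hjk : M.m j k = 3) :
    bform M v (sroot i) + bform M v (sroot j) + bform M v (sroot k) ≤ 0 := by
  simp only [bform_sroot_right, ← Finset.sum_add_distrib, ← mul_add]
  refine Finset.sum_nonpos fun m _ => mul_nonpos_of_nonneg_of_nonpos (hv.2 m) ?_
  by_cases hmi : m = i
  · subst hmi; rw [cf_self, cf_of_m_eq_three hij, cf_of_m_eq_three hik]; norm_num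
  by_cases hmj : m = j
  · subst hmj; rw [cf_comm, cf_self, cf_of_m_eq_three hij, cf_of_m_eq_three hjk]; norm_num
  by_cases hmk : m = k
  · subst hmk
    rw [cf_comm, cf_of_m_eq_three hik, cf_comm, cf_of_m_eq_three hjk, cf_self]; norm_num
  linarith [cf_nonpos hs hmi, cf_nonpos hs hmj, cf_nonpos hs hmk]

section LawrenceKrammer

variable {R : Type} [CommRing R]

/-- The coefficient `f_i (φ_j e_α)` for the linear form `f_i = ∑_α F i α e_α^*`. -/
noncomputable def evalPhi (a b c d : R) (F : I → Pos M → R) (i j : I) (α : Pos M) : R :=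
  Finsupp.lift R R (Pos M) (F i) (phi M R a b c d j (ev M R α))

/-- Conditions (C1)–(C7) on the values `F i α = f_i (e_α)`. -/
structure IsParisFamily (a b c d fr : R) (F : I → Pos M → R) : Prop where
  simple_self : ∀ i : I, F i (simplePos M i) = fr
  simple_of_ne : ∀ i j : I, i ≠ j → F i (simplePos M j) = 0
  of_bform_pos : ∀ (i : I) (α : Pos M), 2 ≤ dep M α.1 → 0 < bform M α.1 (sroot i) →
    F i α = -(a * fr * Ring.inverse c) * (b * Ring.inverse d) ^ (dep M α.1 - 2)
  comm : ∀ (i j : I) (α β : Pos M), 2 ≤ dep M α.1 → bform M α.1 (sroot i) ≤ 0 →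
    0 < bform M α.1 (sroot j) → β.1 = srefl M j α.1 → M.m i j = 2 →
    F i α = b * Ring.inverse d * F i β
  braid_descent : ∀ (i j : I) (α β γ : Pos M), 2 ≤ dep M α.1 → bform M α.1 (sroot i) ≤ 0 →
    0 < bform M α.1 (sroot j) → β.1 = srefl M j α.1 → M.m i j = 3 →
    γ.1 = srefl M i β.1 → dep M γ.1 + 1 = dep M β.1 →
    F i α = Ring.inverse c * (b * F j γ - a * F i β)
  braid_fixed : ∀ (i j : I) (α β : Pos M), 2 ≤ dep M α.1 → bform M α.1 (sroot i) ≤ 0 →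
    0 < bform M α.1 (sroot j) → β.1 = srefl M j α.1 → M.m i j = 3 →
    srefl M i β.1 = β.1 →
    F i α = Ring.inverse c * (d * F j β - a * F i β)
  braid_ascent : ∀ (i j : I) (α β : Pos M), 2 ≤ dep M α.1 → bform M α.1 (sroot i) ≤ 0 →
    0 < bform M α.1 (sroot j) → β.1 = srefl M j α.1 → M.m i j = 3 →
    dep M (srefl M i β.1) = dep M β.1 + 1 →
    F i α = b * Ring.inverse d * F i β + d * Ring.inverse c * F j β
      + a * d * fr * Ring.inverse (c * c) * (b * Ring.inverse d) ^ (dep M α.1 - 3)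

variable {a b c d fr : R} {F : I → Pos M → R} {i j : I}

theorem lift_ev (g : Pos M → R) (α : Pos M) : Finsupp.lift R R (Pos M) g (ev M R α) = g α := by
  simp [ev]

theorem ext_ev {f g : VV M R →ₗ[R] R} (h : ∀ α, f (ev M R α) = g (ev M R α)) : f = g :=
  Finsupp.lhom_ext' fun α => LinearMap.ext_ring (h α)

theorem evalPhi_eq (a b c d : R) (F : I → Pos M → R) (i j : I) (α : Pos M) :
    evalPhi a b c d F i j α = Finsupp.lift R R (Pos M) (F i) (phiAux M R a b c d j α) := by
  simp [evalPhi, phi, ev]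

theorem evalPhi_of_eq_sroot {α : Pos M} (h : α.1 = sroot j) : evalPhi a b c d F i j α = 0 := by
  rw [evalPhi_eq, phiAux, if_pos h, map_zero]

theorem evalPhi_of_bform_eq_zero {α : Pos M} (h : bform M α.1 (sroot j) = 0) :
    evalPhi a b c d F i j α = d * F i α := by
  rw [evalPhi_eq, phiAux, if_neg (ne_sroot_of_bform_nonpos h.le),
    if_pos (srefl_of_bform_eq_zero h), map_smul, lift_ev, smul_eq_mul]

theorem evalPhi_of_bform_pos {α : Pos M} (hs : M.Small) (hpos : 0 < bform M α.1 (sroot j))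
    (hne : α.1 ≠ sroot j) {β : Pos M} (hβ : β.1 = srefl M j α.1) :
    evalPhi a b c d F i j α = b * F i β := by
  have hβpos := α.2.srefl_of_ne hs hne
  have hdep := α.2.dep_srefl_add_one_of_bform_pos hs hpos hne
  have hfix : srefl M j α.1 ≠ α.1 := fun h => by rw [srefl_eq_self_iff] at h; linarith
  rw [evalPhi_eq, phiAux, if_neg hne, if_neg hfix, dif_pos hβpos, if_neg (by omega),
    show (⟨_, hβpos⟩ : Pos M) = β from Subtype.ext hβ.symm, map_smul, lift_ev, smul_eq_mul]

theorem evalPhi_of_bform_neg {α : Pos M} (hs : M.Small) (hneg : bform M α.1 (sroot j) < 0)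
    {β : Pos M} (hβ : β.1 = srefl M j α.1) :
    evalPhi a b c d F i j α = a * F i α + c * F i β := by
  have hβpos := α.2.srefl_of_ne hs (ne_sroot_of_bform_nonpos hneg.le)
  have hdep := α.2.dep_srefl_of_bform_neg hs hneg
  have hfix : srefl M j α.1 ≠ α.1 := fun h => by rw [srefl_eq_self_iff] at h; linarith
  rw [evalPhi_eq, phiAux, if_neg (ne_sroot_of_bform_nonpos hneg.le), if_neg hfix,
    dif_pos hβpos, if_pos (by omega), show (⟨_, hβpos⟩ : Pos M) = β from Subtype.ext hβ.symm,
    map_add, map_smul, map_smul, lift_ev, lift_ev, smul_eq_mul, smul_eq_mul]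

theorem apply_eq_of_evalPhi_comm (hd : IsUnit d) {β : Pos M} (hi : bform M β.1 (sroot i) = 0)
    (hj : bform M β.1 (sroot j) = 0) (h : evalPhi a b c d F i j β = evalPhi a b c d F j i β) :
    F i β = F j β := by
  rw [evalPhi_of_bform_eq_zero hj, evalPhi_of_bform_eq_zero hi] at h
  exact hd.mul_left_cancel h

namespace IsParisFamily

theorem mul_apply_of_m_eq_two (hF : IsParisFamily a b c d fr F) (hs : M.Small) (hd : IsUnit d)
    (h2 : M.m i j = 2) {γ β : Pos M} (hpos : 0 < bform M γ.1 (sroot j)) (hne : γ.1 ≠ sroot j)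
    (hβ : β.1 = srefl M j γ.1) : d * F i γ = b * F i β := by
  have hdinv : d * Ring.inverse d = 1 := Ring.mul_inverse_cancel d hd
  have hγ2 := γ.2.two_le_dep hs hpos hne
  by_cases hγi : bform M γ.1 (sroot i) ≤ 0
  · rw [hF.comm i j γ β hγ2 hγi hpos hβ h2]
    linear_combination b * F i β * hdinv
  push Not at hγi
  have hβi : bform M β.1 (sroot i) = bform M γ.1 (sroot i) := by
    rw [hβ, bform_srefl_of_m_eq_two ((M.symm j i).trans h2)]
  have hβne : β.1 ≠ sroot i := by
    intro h
    rw [← srefl_srefl M j γ.1, ← hβ, h, srefl_sroot_of_m_eq_two h2, bform_sroot_sroot,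
      cf_of_m_eq_two h2] at hpos
    exact lt_irrefl 0 hpos
  have hβ2 := β.2.two_le_dep hs (hβi ▸ hγi) hβne
  have hdep := γ.2.dep_srefl_add_one_of_bform_pos hs hpos hne
  rw [← hβ] at hdep
  rw [hF.of_bform_pos i γ hγ2 hγi, hF.of_bform_pos i β hβ2 (hβi ▸ hγi),
    show dep M γ.1 - 2 = dep M β.1 - 2 + 1 by omega, pow_succ]
  linear_combination -(a * fr * Ring.inverse c) * (b * Ring.inverse d) ^ (dep M β.1 - 2) * b *
    hdinv

theorem evalPhi_of_m_eq_two (hF : IsParisFamily a b c d fr F) (hs : M.Small) (hd : IsUnit d)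
    (ha : a = d - b * c * Ring.inverse d) (h2 : M.m i j = 2) (α : Pos M) :
    evalPhi a b c d F i j α = d * F i α := by
  by_cases hαj : α.1 = sroot j
  · rw [evalPhi_of_eq_sroot hαj, show α = simplePos M j from Subtype.ext hαj,
      hF.simple_of_ne i j (ne_of_m_eq_two h2), mul_zero]
  rcases lt_trichotomy (bform M α.1 (sroot j)) 0 with hneg | h0 | hpos
  · obtain ⟨γ, hγ⟩ := α.exists_srefl hs hαj
    have hγα := hF.mul_apply_of_m_eq_two hs hd h2 (by rw [hγ, bform_srefl_self]; linarith)
      (hγ ▸ α.2.srefl_ne_sroot j) (β := α) (by rw [hγ, srefl_srefl])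
    rw [evalPhi_of_bform_neg hs hneg hγ]
    linear_combination F i α * ha + c * Ring.inverse d * hγα - c * F i γ *
      Ring.mul_inverse_cancel d hd
  · exact evalPhi_of_bform_eq_zero h0
  · obtain ⟨β, hβ⟩ := α.exists_srefl hs hαj
    rw [evalPhi_of_bform_pos hs hpos hαj hβ]
    exact (hF.mul_apply_of_m_eq_two hs hd h2 hpos hαj hβ).symm

theorem evalPhi_simple_self (hF : IsParisFamily a b c d fr F) (hs : M.Small) (hc : IsUnit c)
    (h3 : M.m i j = 3) : evalPhi a b c d F i j (simplePos M i) = 0 := by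
  have hneg : bform M (simplePos M i).1 (sroot j) < 0 := by
    rw [simplePos_val, bform_sroot_sroot, cf_of_m_eq_three h3]; norm_num
  obtain ⟨θ, hθ⟩ := (simplePos M i).exists_srefl hs (ne_sroot_of_bform_nonpos hneg.le)
  have hθdep : dep M θ.1 = 2 := by
    rw [hθ, (simplePos M i).2.dep_srefl_of_bform_neg hs hneg, simplePos_val, dep_sroot]
  have hθi : 0 < bform M θ.1 (sroot i) := by
    rw [hθ, simplePos_val, bform_srefl_of_m_eq_three ((M.symm j i).trans h3), bform_sroot_self,
      bform_sroot_sroot, cf_of_m_eq_three h3]; norm_num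
  rw [evalPhi_of_bform_neg hs hneg hθ, hF.of_bform_pos i θ hθdep.ge hθi, hθdep, hF.simple_self,
    Nat.sub_self, pow_zero]
  linear_combination -(a * fr) * Ring.mul_inverse_cancel c hc

theorem evalPhi_simple_of_ne (hF : IsParisFamily a b c d fr F) (hs : M.Small)
    (h3 : M.m i j = 3) {k : I} (hki : k ≠ i) (hkj : k ≠ j) :
    evalPhi a b c d F i j (simplePos M k) =
      if M.m i k = 3 ∧ M.m j k = 3 then c * (a * d * fr * Ring.inverse (c * c)) else 0 := by
  rcases hs.m_eq_two_or_three hkj with hkj2 | hkj3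
  · rw [evalPhi_of_bform_eq_zero (by rw [simplePos_val, bform_sroot_sroot, cf_of_m_eq_two hkj2]),
      hF.simple_of_ne i k hki.symm, if_neg (by rw [M.symm j k, hkj2]; omega), mul_zero]
  have hneg : bform M (simplePos M k).1 (sroot j) < 0 := by
    rw [simplePos_val, bform_sroot_sroot, cf_of_m_eq_three hkj3]; norm_num
  obtain ⟨ξ, hξ⟩ := (simplePos M k).exists_srefl hs (ne_sroot_of_bform_nonpos hneg.le)
  have hξdep : dep M ξ.1 = 2 := by
    rw [hξ, (simplePos M k).2.dep_srefl_of_bform_neg hs hneg, simplePos_val, dep_sroot]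
  have hξj : 0 < bform M ξ.1 (sroot j) := by rw [hξ, bform_srefl_self]; linarith
  have hξi : bform M ξ.1 (sroot i) = cf M k i - 1 := by
    rw [hξ, simplePos_val, bform_srefl_of_m_eq_three ((M.symm j i).trans h3), bform_sroot_sroot,
      bform_sroot_sroot, cf_of_m_eq_three hkj3]; ring
  have hback : (simplePos M k).1 = srefl M j ξ.1 := by rw [hξ, srefl_srefl]
  rw [evalPhi_of_bform_neg hs hneg hξ, hF.simple_of_ne i k hki.symm, mul_zero, zero_add]
  rcases hs.m_eq_two_or_three hki with hki2 | hki3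
  · rw [if_neg (by rw [M.symm i k, hki2]; omega),
      hF.braid_fixed i j ξ (simplePos M k) hξdep.ge (by rw [hξi, cf_of_m_eq_two hki2]; norm_num)
        hξj hback h3 (by rw [simplePos_val, srefl_sroot_of_m_eq_two hki2]),
      hF.simple_of_ne i k hki.symm, hF.simple_of_ne j k hkj.symm]
    ring
  · have hup : bform M (simplePos M k).1 (sroot i) < 0 := by
      rw [simplePos_val, bform_sroot_sroot, cf_of_m_eq_three hki3]; norm_num
    rw [if_pos ⟨(M.symm i k).trans hki3, (M.symm j k).trans hkj3⟩,
      hF.braid_ascent i j ξ (simplePos M k) hξdep.ge (by rw [hξi, cf_of_m_eq_three hki3]; norm_num)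
        hξj hback h3 ((simplePos M k).2.dep_srefl_of_bform_neg hs hup),
      hF.simple_of_ne i k hki.symm, hF.simple_of_ne j k hkj.symm, hξdep]
    ring

theorem evalPhi_comm_simple (hF : IsParisFamily a b c d fr F) (hs : M.Small) (hc : IsUnit c)
    (h3 : M.m i j = 3) (k : I) :
    evalPhi a b c d F i j (simplePos M k) = evalPhi a b c d F j i (simplePos M k) := by
  have h3' : M.m j i = 3 := (M.symm j i).trans h3
  by_cases hki : k = i
  · subst hki
    rw [hF.evalPhi_simple_self hs hc h3, evalPhi_of_eq_sroot (simplePos_val k)]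
  by_cases hkj : k = j
  · subst hkj
    rw [evalPhi_of_eq_sroot (simplePos_val k), hF.evalPhi_simple_self hs hc h3']
  rw [hF.evalPhi_simple_of_ne hs h3 hki hkj, hF.evalPhi_simple_of_ne hs h3' hkj hki]
  exact if_congr and_comm rfl rfl

theorem evalPhi_comm_of_pos_pos (hF : IsParisFamily a b c d fr F) (hs : M.Small)
    (h3 : M.m i j = 3) {α : Pos M} (hαi : α.1 ≠ sroot i) (hαj : α.1 ≠ sroot j)
    (hsi : 0 < bform M α.1 (sroot i)) (htj : 0 < bform M α.1 (sroot j)) :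
    evalPhi a b c d F i j α = evalPhi a b c d F j i α := by
  have h3' : M.m j i = 3 := (M.symm j i).trans h3
  obtain ⟨β, hβ⟩ := α.exists_srefl hs hαj
  obtain ⟨γ, hγ⟩ := α.exists_srefl hs hαi
  rw [evalPhi_of_bform_pos hs htj hαj hβ, evalPhi_of_bform_pos hs hsi hαi hγ]
  by_cases hβs : β.1 = sroot i
  · have hα : α.1 = sroot i + sroot j := by
      rw [← srefl_srefl M j α.1, ← hβ, hβs, srefl_sroot_of_m_eq_three h3]
    have hγs : γ.1 = sroot j := by rw [hγ, hα, srefl_sroot_add_sroot_of_m_eq_three h3]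
    rw [show β = simplePos M i from Subtype.ext hβs, show γ = simplePos M j from Subtype.ext hγs,
      hF.simple_self, hF.simple_self]
  have hγs : γ.1 ≠ sroot j := by
    intro hγs
    have hα : α.1 = sroot j + sroot i := by
      rw [← srefl_srefl M i α.1, ← hγ, hγs, srefl_sroot_of_m_eq_three h3']
    exact hβs (by rw [hβ, hα, srefl_sroot_add_sroot_of_m_eq_three h3'])
  have hβi : 0 < bform M β.1 (sroot i) := by
    rw [hβ, bform_srefl_of_m_eq_three h3']; linarith
  have hγj : 0 < bform M γ.1 (sroot j) := by
    rw [hγ, bform_srefl_of_m_eq_three h3]; linarith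
  have hβdep := α.2.dep_srefl_add_one_of_bform_pos hs htj hαj
  have hγdep := α.2.dep_srefl_add_one_of_bform_pos hs hsi hαi
  rw [← hβ] at hβdep
  rw [← hγ] at hγdep
  rw [hF.of_bform_pos i β (β.2.two_le_dep hs hβi hβs) hβi,
    hF.of_bform_pos j γ (γ.2.two_le_dep hs hγj hγs) hγj, show dep M β.1 = dep M γ.1 by omega]

theorem evalPhi_comm_of_pos_zero (hF : IsParisFamily a b c d fr F) (hs : M.Small)
    (hd : IsUnit d) (h3 : M.m i j = 3) {α : Pos M} (hαi : α.1 ≠ sroot i)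
    (hsi : 0 < bform M α.1 (sroot i)) (htj : bform M α.1 (sroot j) = 0) :
    evalPhi a b c d F i j α = evalPhi a b c d F j i α := by
  obtain ⟨γ, hγ⟩ := α.exists_srefl hs hαi
  rw [evalPhi_of_bform_eq_zero htj, evalPhi_of_bform_pos hs hsi hαi hγ]
  have hγj : 0 < bform M γ.1 (sroot j) := by
    rw [hγ, bform_srefl_of_m_eq_three h3]; linarith
  have hγs : γ.1 ≠ sroot j := by
    intro hγs
    have hα : α.1 = sroot j + sroot i := by
      rw [← srefl_srefl M i α.1, ← hγ, hγs, srefl_sroot_of_m_eq_three ((M.symm j i).trans h3)]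
    rw [hα, bform_add_left, bform_sroot_self, bform_sroot_sroot, cf_of_m_eq_three h3] at htj
    norm_num at htj
  have hγdep := α.2.dep_srefl_add_one_of_bform_pos hs hsi hαi
  rw [← hγ] at hγdep
  rw [hF.of_bform_pos i α (α.2.two_le_dep hs hsi hαi) hsi,
    hF.of_bform_pos j γ (γ.2.two_le_dep hs hγj hγs) hγj,
    show dep M α.1 - 2 = dep M γ.1 - 2 + 1 by have := γ.2.two_le_dep hs hγj hγs; omega, pow_succ]
  linear_combination -(a * fr * Ring.inverse c) * (b * Ring.inverse d) ^ (dep M γ.1 - 2) * b *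
    Ring.mul_inverse_cancel d hd

theorem evalPhi_comm_of_pos_neg (hF : IsParisFamily a b c d fr F) (hs : M.Small)
    (hc : IsUnit c) (hd : IsUnit d) (ha : a = d - b * c * Ring.inverse d) (h3 : M.m i j = 3)
    {α : Pos M} (hαi : α.1 ≠ sroot i) (hsi : 0 < bform M α.1 (sroot i))
    (htj : bform M α.1 (sroot j) < 0) :
    evalPhi a b c d F i j α = evalPhi a b c d F j i α := by
  obtain ⟨Δ, hΔ⟩ := α.exists_srefl hs (ne_sroot_of_bform_nonpos htj.le)
  obtain ⟨Γ, hΓ⟩ := α.exists_srefl hs hαi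
  rw [evalPhi_of_bform_neg hs htj hΔ, evalPhi_of_bform_pos hs hsi hαi hΓ]
  have hΔi : bform M Δ.1 (sroot i) = bform M α.1 (sroot i) + bform M α.1 (sroot j) := by
    rw [hΔ, bform_srefl_of_m_eq_three ((M.symm j i).trans h3)]
  have hΔj : 0 < bform M Δ.1 (sroot j) := by rw [hΔ, bform_srefl_self]; linarith
  have hΔdep : dep M Δ.1 = dep M α.1 + 1 := by rw [hΔ]; exact α.2.dep_srefl_of_bform_neg hs htj
  have hΓdep := α.2.dep_srefl_add_one_of_bform_pos hs hsi hαi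
  rw [← hΓ] at hΓdep
  have hΔ2 : 2 ≤ dep M Δ.1 := by have := α.2.one_le_dep; omega
  by_cases hst : bform M α.1 (sroot i) + bform M α.1 (sroot j) ≤ 0
  · rw [hF.braid_descent i j Δ α Γ hΔ2 (hΔi ▸ hst) hΔj (by rw [hΔ, srefl_srefl]) h3 hΓ hΓdep]
    linear_combination (b * F j Γ - a * F i α) * Ring.mul_inverse_cancel c hc
  push Not at hst
  have hΓj : 0 < bform M Γ.1 (sroot j) := by rw [hΓ, bform_srefl_of_m_eq_three h3]; linarith
  have hΓs : Γ.1 ≠ sroot j := by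
    intro hΓs
    have hα : α.1 = sroot j + sroot i := by
      rw [← srefl_srefl M i α.1, ← hΓ, hΓs, srefl_sroot_of_m_eq_three ((M.symm j i).trans h3)]
    rw [hα, bform_add_left, bform_sroot_self, bform_sroot_sroot, cf_of_m_eq_three h3] at htj
    norm_num at htj
  have hΓ2 := Γ.2.two_le_dep hs hΓj hΓs
  rw [hF.of_bform_pos i α (α.2.two_le_dep hs hsi hαi) hsi, hF.of_bform_pos i Δ hΔ2 (hΔi ▸ hst),
    hF.of_bform_pos j Γ hΓ2 hΓj, show dep M α.1 - 2 = dep M Γ.1 - 2 + 1 by omega,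
    show dep M Δ.1 - 2 = dep M Γ.1 - 2 + 1 + 1 by omega, pow_succ, pow_succ]
  linear_combination -(a * fr * Ring.inverse c) * (b * Ring.inverse d) ^ (dep M Γ.1 - 2) *
    (b * Ring.inverse d * ha + b * Ring.mul_inverse_cancel d hd)

theorem evalPhi_comm_of_zero_neg (hF : IsParisFamily a b c d fr F) (hs : M.Small)
    (hc : IsUnit c) (h3 : M.m i j = 3) {α : Pos M} (hsi : bform M α.1 (sroot i) = 0)
    (htj : bform M α.1 (sroot j) < 0) :
    evalPhi a b c d F i j α = evalPhi a b c d F j i α := by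
  obtain ⟨Δ, hΔ⟩ := α.exists_srefl hs (ne_sroot_of_bform_nonpos htj.le)
  rw [evalPhi_of_bform_neg hs htj hΔ, evalPhi_of_bform_eq_zero hsi]
  have hΔi : bform M Δ.1 (sroot i) ≤ 0 := by
    rw [hΔ, bform_srefl_of_m_eq_three ((M.symm j i).trans h3)]; linarith
  have hΔj : 0 < bform M Δ.1 (sroot j) := by rw [hΔ, bform_srefl_self]; linarith
  have hΔ2 : 2 ≤ dep M Δ.1 := by
    rw [hΔ, α.2.dep_srefl_of_bform_neg hs htj]; have := α.2.one_le_dep; omega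
  rw [hF.braid_fixed i j Δ α hΔ2 hΔi hΔj (by rw [hΔ, srefl_srefl]) h3
    (srefl_of_bform_eq_zero hsi)]
  linear_combination (d * F j α - a * F i α) * Ring.mul_inverse_cancel c hc

theorem evalPhi_comm_of_neg_neg (hF : IsParisFamily a b c d fr F) (hs : M.Small)
    (hc : IsUnit c) (ha : a = d - b * c * Ring.inverse d) (h3 : M.m i j = 3) {α : Pos M}
    (hsi : bform M α.1 (sroot i) < 0) (htj : bform M α.1 (sroot j) < 0) :
    evalPhi a b c d F i j α = evalPhi a b c d F j i α := by
  have h3' : M.m j i = 3 := (M.symm j i).trans h3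
  obtain ⟨Δ, hΔ⟩ := α.exists_srefl hs (ne_sroot_of_bform_nonpos htj.le)
  obtain ⟨Γ, hΓ⟩ := α.exists_srefl hs (ne_sroot_of_bform_nonpos hsi.le)
  rw [evalPhi_of_bform_neg hs htj hΔ, evalPhi_of_bform_neg hs hsi hΓ]
  have hΔdep : dep M Δ.1 = dep M α.1 + 1 := by rw [hΔ]; exact α.2.dep_srefl_of_bform_neg hs htj
  have hΓdep : dep M Γ.1 = dep M α.1 + 1 := by rw [hΓ]; exact α.2.dep_srefl_of_bform_neg hs hsi
  have := α.2.one_le_dep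
  rw [hF.braid_ascent i j Δ α (by omega) (by rw [hΔ, bform_srefl_of_m_eq_three h3']; linarith)
      (by rw [hΔ, bform_srefl_self]; linarith) (by rw [hΔ, srefl_srefl]) h3
      (α.2.dep_srefl_of_bform_neg hs hsi),
    hF.braid_ascent j i Γ α (by omega) (by rw [hΓ, bform_srefl_of_m_eq_three h3]; linarith)
      (by rw [hΓ, bform_srefl_self]; linarith) (by rw [hΓ, srefl_srefl]) h3'
      (α.2.dep_srefl_of_bform_neg hs htj), hΔdep, hΓdep]
  linear_combination (F i α - F j α) * ha - d * (F i α - F j α) * Ring.mul_inverse_cancel c hc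

theorem apply_eq_of_zero_zero_of_m_eq_two (hF : IsParisFamily a b c d fr F) (hs : M.Small)
    (hd : IsUnit d) {α : Pos M} (hsi : bform M α.1 (sroot i) = 0)
    (htj : bform M α.1 (sroot j) = 0) {k : I} (hk : 0 < bform M α.1 (sroot k))
    (hαk : α.1 ≠ sroot k) (hik : M.m i k = 2) (hjk : M.m j k = 2)
    (IH : ∀ β : Pos M, dep M β.1 < dep M α.1 →
      evalPhi a b c d F i j β = evalPhi a b c d F j i β) :
    F i α = F j α := by
  obtain ⟨β, hβ⟩ := α.exists_srefl hs hαk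
  have hα2 := α.2.two_le_dep hs hk hαk
  have hβdep := α.2.dep_srefl_add_one_of_bform_pos hs hk hαk
  rw [← hβ] at hβdep
  rw [hF.comm i k α β hα2 hsi.le hk hβ hik, hF.comm j k α β hα2 htj.le hk hβ hjk,
    apply_eq_of_evalPhi_comm hd
      (by rw [hβ, bform_srefl_of_m_eq_two ((M.symm k i).trans hik), hsi])
      (by rw [hβ, bform_srefl_of_m_eq_two ((M.symm k j).trans hjk), htj]) (IH β (by omega))]

theorem apply_eq_of_zero_zero_of_m_eq_three (hF : IsParisFamily a b c d fr F) (hs : M.Small)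
    (hc : IsUnit c) (hd : IsUnit d) (h3 : M.m i j = 3) {α : Pos M}
    (hsi : bform M α.1 (sroot i) = 0) (htj : bform M α.1 (sroot j) = 0) {k : I}
    (hk : 0 < bform M α.1 (sroot k)) (hαk : α.1 ≠ sroot k) (hik : M.m i k = 2)
    (hjk : M.m j k = 3)
    (IH : ∀ β : Pos M, dep M β.1 < dep M α.1 → ∀ i j : I, M.m i j = 3 →
      evalPhi a b c d F i j β = evalPhi a b c d F j i β) :
    F i α = F j α := by
  have hki : M.m k i = 2 := (M.symm k i).trans hik
  have hji : M.m j i = 3 := (M.symm j i).trans h3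
  have hα2 := α.2.two_le_dep hs hk hαk
  -- `β = s_k α`, `γ = s_j β`, `δ = s_i γ` have decreasing depth, and the relations at these
  -- three roots, together with (C4) and (C5), determine `F i α` and `F j α`
  obtain ⟨β, hβ⟩ := α.exists_srefl hs hαk
  have hβdep := α.2.dep_srefl_add_one_of_bform_pos hs hk hαk
  rw [← hβ] at hβdep
  have hβi : bform M β.1 (sroot i) = 0 := by rw [hβ, bform_srefl_of_m_eq_two hki, hsi]
  have hβj : bform M β.1 (sroot j) = bform M α.1 (sroot k) := by
    rw [hβ, bform_srefl_of_m_eq_three ((M.symm k j).trans hjk), htj, zero_add]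
  have hβs : β.1 ≠ sroot j := by
    intro h
    have hα : α.1 = sroot j + sroot k := by
      rw [← srefl_srefl M k α.1, ← hβ, h, srefl_sroot_of_m_eq_three hjk]
    rw [hα, bform_add_left, bform_sroot_sroot, bform_sroot_sroot, cf_of_m_eq_three hji,
      cf_of_m_eq_two hki] at hsi
    norm_num at hsi
  obtain ⟨γ, hγ⟩ := β.exists_srefl hs hβs
  have hγdep := β.2.dep_srefl_add_one_of_bform_pos hs (hβj ▸ hk) hβs
  rw [← hγ] at hγdep
  have hγi : bform M γ.1 (sroot i) = bform M α.1 (sroot k) := by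
    rw [hγ, bform_srefl_of_m_eq_three hji, hβi, hβj, zero_add]
  have hγj : bform M γ.1 (sroot j) = -bform M α.1 (sroot k) := by
    rw [hγ, bform_srefl_self, hβj]
  have hγk : bform M γ.1 (sroot k) = 0 := by
    rw [hγ, bform_srefl_of_m_eq_three hjk, hβ, bform_srefl_self, ← hβ, hβj, neg_add_cancel]
  have hγs : γ.1 ≠ sroot i := by
    intro h
    rw [h, bform_sroot_self] at hγi
    rw [h, bform_sroot_sroot, cf_of_m_eq_three h3] at hγj
    linarith
  obtain ⟨δ, hδ⟩ := γ.exists_srefl hs hγs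
  have hδdep := γ.2.dep_srefl_add_one_of_bform_pos hs (hγi ▸ hk) hγs
  rw [← hδ] at hδdep
  have hδj : bform M δ.1 (sroot j) = 0 := by
    rw [hδ, bform_srefl_of_m_eq_three h3, hγj, hγi, neg_add_cancel]
  have hδk : bform M δ.1 (sroot k) = 0 := by rw [hδ, bform_srefl_of_m_eq_two hik, hγk]
  have hIHβ := IH β (by omega) i j h3
  rw [evalPhi_of_bform_pos hs (hβj ▸ hk) hβs hγ, evalPhi_of_bform_eq_zero hβi] at hIHβ
  have hIHγ := IH γ (by omega) i j h3
  rw [evalPhi_of_bform_neg hs (by rw [hγj]; linarith) (β := β) (by rw [hγ, srefl_srefl]),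
    evalPhi_of_bform_pos hs (hγi ▸ hk) hγs hδ] at hIHγ
  have hIHδ := apply_eq_of_evalPhi_comm hd hδj hδk (IH δ (by omega) j k hjk)
  rw [hF.comm i k α β hα2 hsi.le hk hβ hik,
    hF.braid_descent j k α β γ hα2 htj.le hk hβ hjk hγ hγdep,
    hF.comm k i γ δ (γ.2.two_le_dep hs (hγi ▸ hk) hγs) hγk.le (hγi ▸ hk) hδ hki, ← hIHδ]
  linear_combination b * Ring.inverse d * Ring.inverse c * hIHγ
    - a * Ring.inverse c * Ring.inverse d * hIHβ
    - b * Ring.inverse d * F i β * Ring.mul_inverse_cancel c hc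
    - a * Ring.inverse c * F j β * Ring.mul_inverse_cancel d hd

theorem evalPhi_comm_of_zero_zero (hF : IsParisFamily a b c d fr F) (hs : M.Small)
    (hc : IsUnit c) (hd : IsUnit d) (h3 : M.m i j = 3) {α : Pos M} (hα : ∀ k, α.1 ≠ sroot k)
    (hsi : bform M α.1 (sroot i) = 0) (htj : bform M α.1 (sroot j) = 0)
    (IH : ∀ β : Pos M, dep M β.1 < dep M α.1 → ∀ i j : I, M.m i j = 3 →
      evalPhi a b c d F i j β = evalPhi a b c d F j i β) :
    evalPhi a b c d F i j α = evalPhi a b c d F j i α := by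
  rw [evalPhi_of_bform_eq_zero htj, evalPhi_of_bform_eq_zero hsi]
  obtain ⟨k, hk⟩ := α.2.exists_bform_sroot_pos
  have hki : k ≠ i := by rintro rfl; linarith
  have hkj : k ≠ j := by rintro rfl; linarith
  rcases hs.m_eq_two_or_three hki.symm with hik | hik <;>
    rcases hs.m_eq_two_or_three hkj.symm with hjk | hjk
  · rw [hF.apply_eq_of_zero_zero_of_m_eq_two hs hd hsi htj hk (hα k) hik hjk
      fun β hβ => IH β hβ i j h3]
  · rw [hF.apply_eq_of_zero_zero_of_m_eq_three hs hc hd h3 hsi htj hk (hα k) hik hjk IH]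
  · rw [hF.apply_eq_of_zero_zero_of_m_eq_three hs hc hd ((M.symm j i).trans h3) htj hsi hk
      (hα k) hjk hik IH]
  · have := α.2.bform_add_add_nonpos hs h3 hik hjk
    linarith

theorem evalPhi_comm_of_m_eq_three (hF : IsParisFamily a b c d fr F) (hs : M.Small)
    (hc : IsUnit c) (hd : IsUnit d) (ha : a = d - b * c * Ring.inverse d) (α : Pos M)
    {i j : I} (h3 : M.m i j = 3) : evalPhi a b c d F i j α = evalPhi a b c d F j i α := by
  have h3' : M.m j i = 3 := (M.symm j i).trans h3
  by_cases hsimple : ∃ k, α.1 = sroot k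
  · obtain ⟨k, hk⟩ := hsimple
    rw [show α = simplePos M k from Subtype.ext hk]
    exact hF.evalPhi_comm_simple hs hc h3 k
  push Not at hsimple
  have IH : ∀ β : Pos M, dep M β.1 < dep M α.1 → ∀ i j : I, M.m i j = 3 →
      evalPhi a b c d F i j β = evalPhi a b c d F j i β :=
    fun β _ _ _ h => hF.evalPhi_comm_of_m_eq_three hs hc hd ha β h
  rcases lt_trichotomy (bform M α.1 (sroot i)) 0 with hsi | hsi | hsi <;>
    rcases lt_trichotomy (bform M α.1 (sroot j)) 0 with htj | htj | htj
  · exact hF.evalPhi_comm_of_neg_neg hs hc ha h3 hsi htj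
  · exact (hF.evalPhi_comm_of_zero_neg hs hc h3' htj hsi).symm
  · exact (hF.evalPhi_comm_of_pos_neg hs hc hd ha h3' (hsimple j) htj hsi).symm
  · exact hF.evalPhi_comm_of_zero_neg hs hc h3 hsi htj
  · exact hF.evalPhi_comm_of_zero_zero hs hc hd h3 hsimple hsi htj IH
  · exact (hF.evalPhi_comm_of_pos_zero hs hd h3' (hsimple j) htj hsi).symm
  · exact hF.evalPhi_comm_of_pos_neg hs hc hd ha h3 (hsimple i) hsi htj
  · exact hF.evalPhi_comm_of_pos_zero hs hd h3 (hsimple i) hsi htj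
  · exact hF.evalPhi_comm_of_pos_pos hs h3 (hsimple i) (hsimple j) hsi htj
termination_by dep M α.1

end IsParisFamily

end LawrenceKrammer

end RootSystem

end LK

open LK in
theorem statement_12_general {I : Type} [Fintype I] [DecidableEq I] (M : CoxM I) (hsmall : M.Small)
    (R : Type) [CommRing R] (b c d : R) (hc : IsUnit c) (hd : IsUnit d)
    (a : R) (ha : a = d - b * c * Ring.inverse d)
    (fr : R) (F : I → Pos M → R)
    (hC1 : ∀ i : I, F i (simplePos M i) = fr)
    (hC2 : ∀ i j : I, i ≠ j → F i (simplePos M j) = 0)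
    (hC3 : ∀ (i : I) (aa : Pos M), 2 ≤ dep M aa.1 → 0 < bform M aa.1 (sroot i) →
      F i aa = -(a * fr * Ring.inverse c) * (b * Ring.inverse d) ^ (dep M aa.1 - 2))
    (hC4 : ∀ (i j : I) (aa bb : Pos M), 2 ≤ dep M aa.1 → bform M aa.1 (sroot i) ≤ 0 →
      0 < bform M aa.1 (sroot j) → bb.1 = srefl M j aa.1 → M.m i j = 2 →
      F i aa = b * Ring.inverse d * F i bb)
    (hC5 : ∀ (i j : I) (aa bb gg : Pos M), 2 ≤ dep M aa.1 → bform M aa.1 (sroot i) ≤ 0 →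
      0 < bform M aa.1 (sroot j) → bb.1 = srefl M j aa.1 → M.m i j = 3 →
      gg.1 = srefl M i bb.1 → dep M gg.1 + 1 = dep M bb.1 →
      F i aa = Ring.inverse c * (b * F j gg - a * F i bb))
    (hC6 : ∀ (i j : I) (aa bb : Pos M), 2 ≤ dep M aa.1 → bform M aa.1 (sroot i) ≤ 0 →
      0 < bform M aa.1 (sroot j) → bb.1 = srefl M j aa.1 → M.m i j = 3 →
      srefl M i bb.1 = bb.1 →
      F i aa = Ring.inverse c * (d * F j bb - a * F i bb))
    (hC7 : ∀ (i j : I) (aa bb : Pos M), 2 ≤ dep M aa.1 → bform M aa.1 (sroot i) ≤ 0 →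
      0 < bform M aa.1 (sroot j) → bb.1 = srefl M j aa.1 → M.m i j = 3 →
      dep M (srefl M i bb.1) = dep M bb.1 + 1 →
      F i aa = b * Ring.inverse d * F i bb + d * Ring.inverse c * F j bb
        + a * d * fr * Ring.inverse (c * c) * (b * Ring.inverse d) ^ (dep M aa.1 - 3)) :
    IsLK M R a b c d (fun i => (Finsupp.lift R R (Pos M)) (F i)) := by
  have hF : IsParisFamily a b c d fr F := ⟨hC1, hC2, hC3, hC4, hC5, hC6, hC7⟩
  refine ⟨fun i j hij => ?_, fun i j h2 => ?_, fun i j h3 => ?_⟩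
  · rw [lift_ev, hC2 i j hij]
  · refine ext_ev fun α => ?_
    rw [LinearMap.smul_apply, lift_ev, smul_eq_mul]
    exact hF.evalPhi_of_m_eq_two hsmall hd ha h2 α
  · exact ext_ev fun α => hF.evalPhi_comm_of_m_eq_three hsmall hc hd ha α h3

open LK in
/-- the inductive construction of Paris yields an LK-family. -/
theorem statement_12 {I : Type} [Fintype I] [DecidableEq I] (M : CoxM I) (hsmall : M.Small)
    (R : Type) [CommRing R] (b c d : R) (hb : IsUnit b) (hc : IsUnit c) (hd : IsUnit d)
    (a : R) (ha : a = d - b * c * Ring.inverse d)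
    (fr : R) (F : I → Pos M → R)
    (hC1 : ∀ i : I, F i (simplePos M i) = fr)
    (hC2 : ∀ i j : I, i ≠ j → F i (simplePos M j) = 0)
    (hC3 : ∀ (i : I) (aa : Pos M), 2 ≤ dep M aa.1 → 0 < bform M aa.1 (sroot i) →
      F i aa = -(a * fr * Ring.inverse c) * (b * Ring.inverse d) ^ (dep M aa.1 - 2))
    (hC4 : ∀ (i j : I) (aa bb : Pos M), 2 ≤ dep M aa.1 → bform M aa.1 (sroot i) ≤ 0 →
      0 < bform M aa.1 (sroot j) → bb.1 = srefl M j aa.1 → M.m i j = 2 →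
      F i aa = b * Ring.inverse d * F i bb)
    (hC5 : ∀ (i j : I) (aa bb gg : Pos M), 2 ≤ dep M aa.1 → bform M aa.1 (sroot i) ≤ 0 →
      0 < bform M aa.1 (sroot j) → bb.1 = srefl M j aa.1 → M.m i j = 3 →
      gg.1 = srefl M i bb.1 → dep M gg.1 + 1 = dep M bb.1 →
      F i aa = Ring.inverse c * (b * F j gg - a * F i bb))
    (hC6 : ∀ (i j : I) (aa bb : Pos M), 2 ≤ dep M aa.1 → bform M aa.1 (sroot i) ≤ 0 →
      0 < bform M aa.1 (sroot j) → bb.1 = srefl M j aa.1 → M.m i j = 3 →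
      srefl M i bb.1 = bb.1 →
      F i aa = Ring.inverse c * (d * F j bb - a * F i bb))
    (hC7 : ∀ (i j : I) (aa bb : Pos M), 2 ≤ dep M aa.1 → bform M aa.1 (sroot i) ≤ 0 →
      0 < bform M aa.1 (sroot j) → bb.1 = srefl M j aa.1 → M.m i j = 3 →
      dep M (srefl M i bb.1) = dep M bb.1 + 1 →
      F i aa = b * Ring.inverse d * F i bb + d * Ring.inverse c * F j bb
        + a * d * fr * Ring.inverse (c * c) * (b * Ring.inverse d) ^ (dep M aa.1 - 3)) :
    IsLK M R a b c d (fun i => (Finsupp.lift R R (Pos M)) (F i)) :=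
  statement_12_general M hsmall R b c d hc hd a ha fr F hC1 hC2 hC3 hC4 hC5 hC6 hC7
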